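/- Let D be a triangulated category with a bounded t-structure with heart A, and F : D^b(A) → D a realization functor. Then for all X, Y ∈ A, F induces an isomorphism Ext^1_A(X, Y) → Hom_D(X, Σ(Y)) and an injection Ext^2_A(X, Y) → Hom_D(X, Σ^2(Y)). -/

import Mathlib

/-!
In `D^b(A)` as in `D`, a morphism `X ⟶ Σ Y` between objects of the heart is the connecting
morphism of the triangle of a short exact sequence `0 → Y → E → X → 0` of `A`: the heart is
closed under extensions, so every such morphism arises, and two sequences with the same
connecting morphism are Yoneda equivalent. As `F` preserves triangles, it is therefore bijective
on `Hom(X, Σ Y)`. A class in `Ext²_A(X, Y)` is a Yoneda product `a ∪ δ`, with `δ : Z ⟶ Σ Y` the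
connecting morphism of some `0 → Y → E → Z → 0`. If `F (a ∪ δ) = 0`, exactness of `Hom(F X, -)`
along the shifted triangle gives `F a = b ∪ F p`; bijectivity in degree one lifts this to
`a = b' ∪ p`, and then `a ∪ δ = b' ∪ (p ∪ δ) = 0`.
-/

open CategoryTheory Category Limits Pretriangulated Triangulated ZeroObject

namespace HRS

variable (A : Type*) [Category A] [Abelian A]

/-- A short exact sequence `0 ⟶ Y ⟶ E ⟶ X ⟶ 0` in `A`, i.e. an extension of `X` by `Y`. -/
structure SES (X Y : A) where
  E : A
  i : Y ⟶ E
  p : E ⟶ X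
  w : i ≫ p = 0
  ex : (ShortComplex.mk i p w).ShortExact

/-- A torsion pair `(T, F)` in the abelian category `A`. -/
structure TorsionPair (T F : A → Prop) : Prop where
  hom_zero : ∀ ⦃t f : A⦄, T t → F f → ∀ (g : t ⟶ f), g = 0
  exists_ses : ∀ X : A, ∃ (t f : A) (i : t ⟶ X) (p : X ⟶ f) (w : i ≫ p = 0),
    T t ∧ F f ∧ (ShortComplex.mk i p w).ShortExact

/-- `n`-fold Yoneda extensions of `X` by `Y`, presented as iterated splices of
short exact sequences. -/
inductive ExtSeq : ℕ → A → A → Type _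
  | base {X Y : A} (s : SES A X Y) : ExtSeq 1 X Y
  | splice {n : ℕ} {X Y Z : A} (s : SES A Z Y) (ξ : ExtSeq n X Z) : ExtSeq (n + 1) X Y

/-- Morphisms of Yoneda extensions over a pair of morphisms on the two end terms. -/
inductive ExtHom : ∀ {n : ℕ} {X X' Y Y' : A}, (Y ⟶ Y') → (X ⟶ X') →
    ExtSeq A n X Y → ExtSeq A n X' Y' → Prop
  | base {X X' Y Y' : A} {a : Y ⟶ Y'} {b : X ⟶ X'} (s : SES A X Y) (s' : SES A X' Y')
      (e : s.E ⟶ s'.E) (h1 : s.i ≫ e = a ≫ s'.i) (h2 : s.p ≫ b = e ≫ s'.p) :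
      ExtHom a b (.base s) (.base s')
  | splice {n : ℕ} {X X' Y Y' Z Z' : A} {a : Y ⟶ Y'} {b : X ⟶ X'} (t : Z ⟶ Z')
      (s : SES A Z Y) (s' : SES A Z' Y') (ξ : ExtSeq A n X Z) (ξ' : ExtSeq A n X' Z')
      (e : s.E ⟶ s'.E) (h1 : s.i ≫ e = a ≫ s'.i) (h2 : s.p ≫ t = e ≫ s'.p)
      (h : ExtHom t b ξ ξ') :
      ExtHom a b (.splice s ξ) (.splice s' ξ')

/-- The Yoneda equivalence relation on `n`-fold extensions of `X` by `Y`: the equivalence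
relation generated by the existence of a morphism of extensions which is the identity
on both end terms. -/
def ExtEquiv {n : ℕ} {X Y : A} (ξ ξ' : ExtSeq A n X Y) : Prop :=
  Relation.EqvGen (fun ζ ζ' => ExtHom A (𝟙 Y) (𝟙 X) ζ ζ') ξ ξ'

/-- The `n`-th Yoneda extension group (as a set) `Yext^n_A(X, Y)`. -/
def Yext (n : ℕ) (X Y : A) : Type _ :=
  Quot (fun ξ ξ' : ExtSeq A n X Y => ExtHom A (𝟙 Y) (𝟙 X) ξ ξ')

/-- The class of an extension in `Yext`. -/
def Yext.mk {n : ℕ} {X Y : A} (ξ : ExtSeq A n X Y) : Yext A n X Y := Quot.mk _ ξ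

/-- The short exact sequence `0 ⟶ Y ⟶ Y ⟶ 0 ⟶ 0`. -/
noncomputable def sesToZero (Y : A) : SES A (0 : A) Y where
  E := Y
  i := 𝟙 Y
  p := 0
  w := by simp
  ex := (ShortComplex.Splitting.shortExact
    { r := 𝟙 Y
      s := 0
      f_r := by simp
      s_g := by apply Subsingleton.elim
      id := by simp })

/-- The short exact sequence `0 ⟶ 0 ⟶ 0 ⟶ 0 ⟶ 0`. -/
noncomputable def sesZero : SES A (0 : A) (0 : A) where
  E := 0
  i := 0
  p := 0
  w := by simp
  ex := (ShortComplex.Splitting.shortExact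
    { r := 0
      s := 0
      f_r := by apply Subsingleton.elim
      s_g := by apply Subsingleton.elim
      id := by apply Subsingleton.elim })

/-- The short exact sequence `0 ⟶ 0 ⟶ X ⟶ X ⟶ 0`. -/
noncomputable def sesFromZero (X : A) : SES A X (0 : A) where
  E := X
  i := 0
  p := 𝟙 X
  w := by simp
  ex := (ShortComplex.Splitting.shortExact
    { r := 0
      s := 𝟙 X
      f_r := by apply Subsingleton.elim
      s_g := by simp
      id := by simp })

/-- The trivial 3-fold extension `0 → Y → Y → 0 → X → X → 0`, representing the zero
class in `Yext^3_A(X, Y)`. -/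
noncomputable def trivialExt3 (X Y : A) : ExtSeq A 3 X Y :=
  ExtSeq.splice (sesToZero A Y) (ExtSeq.splice (sesZero A) (ExtSeq.base (sesFromZero A X)))

/-- `Sub P`: subobjects of objects satisfying `P`. -/
def SubP (P : A → Prop) (X : A) : Prop := ∃ (U : A) (m : X ⟶ U), P U ∧ Mono m

/-- `Fac P`: quotient objects of objects satisfying `P`. -/
def FacP (P : A → Prop) (X : A) : Prop := ∃ (U : A) (p : U ⟶ X), P U ∧ Epi p

/-- `P * Q`: objects that are extensions of an object satisfying `Q` by one satisfying `P`. -/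
def StarP (P Q : A → Prop) (X : A) : Prop :=
  ∃ (u v : A) (i : u ⟶ X) (p : X ⟶ v) (w : i ≫ p = 0),
    P u ∧ Q v ∧ (ShortComplex.mk i p w).ShortExact

variable (D : Type*) [Category D] [HasZeroObject D] [Preadditive D] [HasShift D ℤ]
  [∀ n : ℤ, (shiftFunctor D n).Additive] [Pretriangulated D]

/-- The heart of a t-structure, as a predicate on objects. -/
def heartProp (t : TStructure D) (X : D) : Prop := t.le 0 X ∧ t.ge 0 X

/-- A t-structure is bounded if every object lies in some `Σ^i D^{≤0} ∩ Σ^j D^{≥0}`. -/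
def IsBoundedTStructure (t : TStructure D) : Prop := ∀ X : D, ∃ a b : ℤ, t.ge a X ∧ t.le b X

/-- Data realizing an abelian category `A` as the heart of a t-structure `t` on `D`:
a fully faithful additive functor `A ⥤ D` whose essential image is the heart of `t`. -/
structure HeartData (t : TStructure D) where
  ι : A ⥤ D
  additive : ι.Additive
  full : ι.Full
  faithful : ι.Faithful
  essImage_iff : ∀ X : D, ι.essImage X ↔ heartProp D t X

variable {A D}

/-- The property, for a family `θ` of maps from `n`-fold Yoneda extensions in the heart to
`Hom_D(X, Σ^n Y)`, of being the canonical family: it descends to the Yoneda extension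
groups, `θ^1` sends a short exact sequence to the connecting morphism of an associated
distinguished triangle, and `θ^{n+1}` is computed on splices by `Σ^n(θ^1 ξ₁) ∘ θ^n ξ₂`. -/
structure IsCanThetaFamily {t : TStructure D} (h : HeartData A D t)
    (θ : ∀ (n : ℕ) (X Y : A), ExtSeq A n X Y → (h.ι.obj X ⟶ (h.ι.obj Y)⟦(n : ℤ)⟧)) : Prop where
  compat : ∀ {n : ℕ} {X Y : A} (ξ ξ' : ExtSeq A n X Y), ExtEquiv A ξ ξ' →
    θ n X Y ξ = θ n X Y ξ'
  base : ∀ {X Y : A} (s : SES A X Y),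
    Triangle.mk (h.ι.map s.i) (h.ι.map s.p)
      (θ 1 X Y (.base s) ≫ eqToHom (by norm_num)) ∈ distTriang D
  splice : ∀ {n : ℕ} {X Y Z : A} (s : SES A Z Y) (ξ : ExtSeq A n X Z),
    θ (n + 1) X Y (.splice s ξ) = θ n X Z ξ ≫ (θ 1 Z Y (.base s))⟦(n : ℤ)⟧' ≫
      (shiftFunctorAdd' D ((1 : ℕ) : ℤ) ((n : ℕ) : ℤ) (((n + 1 : ℕ)) : ℤ)
        (by push_cast; ring)).inv.app (h.ι.obj Y)

/-- The map induced by `θ^n` on the Yoneda extension group `Yext^n(X, Y)`. -/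
def thetaBar {t : TStructure D} {h : HeartData A D t}
    (θ : ∀ (n : ℕ) (X Y : A), ExtSeq A n X Y → (h.ι.obj X ⟶ (h.ι.obj Y)⟦(n : ℤ)⟧))
    (hθ : IsCanThetaFamily h θ) (n : ℕ) (X Y : A) :
    Yext A n X Y → (h.ι.obj X ⟶ (h.ι.obj Y)⟦(n : ℤ)⟧) :=
  Quot.lift (θ n X Y) (fun ξ ξ' hr => hθ.compat ξ ξ' (Relation.EqvGen.rel _ _ hr))

variable (A D)

/-- The image of a short exact sequence under an exact functor. -/
def mapSES {A' : Type*} [Category A'] [Abelian A'] (G : A' ⥤ A) [G.Additive]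
    (hG : ∀ S : ShortComplex A', S.ShortExact → (S.map G).ShortExact)
    {X Y : A'} (s : SES A' X Y) : SES A (G.obj X) (G.obj Y) where
  E := G.obj s.E
  i := G.map s.i
  p := G.map s.p
  w := by rw [← G.map_comp, s.w]; exact G.map_zero _ _
  ex := hG _ s.ex

/-- The image of a Yoneda extension under an exact functor. -/
def mapExtSeq {A' : Type*} [Category A'] [Abelian A'] (G : A' ⥤ A) [G.Additive]
    (hG : ∀ S : ShortComplex A', S.ShortExact → (S.map G).ShortExact) :
    ∀ {n : ℕ} {X Y : A'}, ExtSeq A' n X Y → ExtSeq A n (G.obj X) (G.obj Y)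
  | _, _, _, .base s => .base (mapSES A G hG s)
  | _, _, _, .splice s ξ => .splice (mapSES A G hG s) (mapExtSeq G hG ξ)

/-- Composition of a chain of morphisms `Σ^i X_i ⟶ Σ^{i+1} X_{i+1}` in `D`,
with all `X_i` in the heart. -/
def chainComp (ι : A ⥤ D) (obj : ℕ → A)
    (g : ∀ i : ℕ, ((ι.obj (obj i))⟦((i : ℕ) : ℤ)⟧ ⟶ (ι.obj (obj (i + 1)))⟦(((i + 1 : ℕ)) : ℤ)⟧)) :
    ∀ n : ℕ, ((ι.obj (obj 0))⟦((0 : ℕ) : ℤ)⟧ ⟶ (ι.obj (obj n))⟦((n : ℕ) : ℤ)⟧)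
  | 0 => 𝟙 _
  | n + 1 => chainComp ι obj g n ≫ g n

/-- A model of the bounded derived category `D^b(A)` of an abelian category `A`:
a triangulated category equipped with a bounded t-structure whose heart is `A`,
such that the canonical maps `Yext^n_A(X, Y) → Hom(X, Σ^n Y)` are bijective for all
`n ≥ 1` (the characteristic-class isomorphisms of the bounded derived category). -/
structure DerivedData where
  t : TStructure D
  bounded : IsBoundedTStructure D t
  heart : HeartData A D t
  θ : ∀ (n : ℕ) (X Y : A), ExtSeq A n X Y → (heart.ι.obj X ⟶ (heart.ι.obj Y)⟦(n : ℤ)⟧)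
  can : IsCanThetaFamily heart θ
  bij : ∀ (n : ℕ), 1 ≤ n → ∀ (X Y : A), Function.Bijective (thetaBar θ can n X Y)

variable {A D}

/-- Membership in the HRS-tilt `B = Σ(F) * T` of `A` with respect to a torsion pair
`(T, F)`, for an object of (a model of) `D^b(A)`. -/
def HRSTiltMem {t : TStructure D} (h : HeartData A D t) (T F : A → Prop) (X : D) : Prop :=
  ∃ (f tt : A), F f ∧ T tt ∧ ∃ (g : (h.ι.obj f)⟦(1 : ℤ)⟧ ⟶ X) (g' : X ⟶ h.ι.obj tt)
    (δ : h.ι.obj tt ⟶ ((h.ι.obj f)⟦(1 : ℤ)⟧)⟦(1 : ℤ)⟧), Triangle.mk g g' δ ∈ distTriang D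

section Triangulated

variable {C D : Type*} [Category C] [Category D] [HasZeroObject C] [HasZeroObject D]
  [Preadditive C] [Preadditive D] [HasShift C ℤ] [HasShift D ℤ]
  [∀ n : ℤ, (shiftFunctor C n).Additive] [∀ n : ℤ, (shiftFunctor D n).Additive]
  [Pretriangulated C] [Pretriangulated D]

lemma Triangle.exists_eq_comp_shift_mor₂ (T : Triangle C) (hT : T ∈ distTriang C) {X : C}
    (f : X ⟶ T.obj₃⟦(1 : ℤ)⟧) (hf : f ≫ T.mor₃⟦(1 : ℤ)⟧' = 0) :
    ∃ g : X ⟶ T.obj₂⟦(1 : ℤ)⟧, f = g ≫ T.mor₂⟦(1 : ℤ)⟧' := by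
  obtain ⟨g, hg⟩ := Triangle.coyoneda_exact₁ _ (rot_of_distTriang _ (rot_of_distTriang _ hT)) f hf
  exact ⟨-g, hg.trans ((Preadditive.comp_neg _ _).trans (Preadditive.neg_comp _ _).symm)⟩

lemma ShiftedHom.comp_mor₃_eq_zero_of_map_eq_zero (F : C ⥤ D) [F.CommShift ℤ] [F.IsTriangulated]
    (T : Triangle C) (hT : T ∈ distTriang C) {X : C}
    (hsurj : Function.Surjective (fun f : ShiftedHom X T.obj₂ (1 : ℤ) => f.map F))
    (hinj : Function.Injective (fun f : ShiftedHom X T.obj₃ (1 : ℤ) => f.map F))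
    (a : ShiftedHom X T.obj₃ (1 : ℤ)) {c : ℤ} (hc : (1 : ℤ) + 1 = c)
    (ha : (a.comp T.mor₃ hc).map F = 0) :
    a.comp T.mor₃ hc = 0 := by
  have hFT := F.map_distinguished T hT
  obtain ⟨w, hw⟩ : ∃ w, a.map F = w ≫ (F.map T.mor₂)⟦(1 : ℤ)⟧' :=
    Triangle.exists_eq_comp_shift_mor₂ _ hFT (a.map F) (by
      rwa [ShiftedHom.map_comp, ShiftedHom.comp, ← assoc,
        Preadditive.IsIso.comp_right_eq_zero] at ha)
  obtain ⟨w₀, rfl⟩ := hsurj w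
  have ha' : a = w₀ ≫ T.mor₂⟦(1 : ℤ)⟧' := hinj (by
    change a.map F = _
    rw [hw]
    simp [ShiftedHom.map, Functor.commShiftIso_hom_naturality])
  rw [ha', ShiftedHom.comp, assoc, ← Functor.map_comp_assoc, comp_distTriang_mor_zero₂₃ _ hT]
  simp

end Triangulated

section Heart

variable {A : Type*} [Category A] [Abelian A]
  {D : Type*} [Category D] [HasZeroObject D] [Preadditive D] [HasShift D ℤ]
  [∀ n : ℤ, (shiftFunctor D n).Additive] [Pretriangulated D] {t : TStructure D}

namespace HeartData

variable (h : HeartData A D t)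

instance : h.ι.Additive := h.additive
instance : h.ι.Full := h.full
instance : h.ι.Faithful := h.faithful

instance isLE_obj (X : A) : t.IsLE (h.ι.obj X) 0 :=
  ⟨((h.essImage_iff _).1 (h.ι.obj_mem_essImage X)).1⟩

instance isGE_obj (X : A) : t.IsGE (h.ι.obj X) 0 :=
  ⟨((h.essImage_iff _).1 (h.ι.obj_mem_essImage X)).2⟩

lemma shiftedHom_eq_zero_of_neg ⦃X Y : A⦄ ⦃n : ℤ⦄ (f : h.ι.obj X ⟶ (h.ι.obj Y)⟦n⟧)
    (hn : n < 0) : f = 0 :=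
  have := t.isGE_shift (h.ι.obj Y) 0 n (-n)
  t.zero f 0 (-n)

noncomputable def sesOfDistTriang {X₁ X₂ X₃ : A} (f₁ : X₁ ⟶ X₂) (f₂ : X₂ ⟶ X₃)
    (f₃ : h.ι.obj X₃ ⟶ (h.ι.obj X₁)⟦(1 : ℤ)⟧)
    (hT : Triangle.mk (h.ι.map f₁) (h.ι.map f₂) f₃ ∈ distTriang D) : SES A X₃ X₁ where
  E := X₂
  i := f₁
  p := f₂
  w := h.ι.map_injective (by
    rw [Functor.map_comp, Functor.map_zero]
    exact comp_distTriang_mor_zero₁₂ _ hT)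
  ex :=
    have hker := AbelianSubcategory.isLimitKernelForkOfDistTriang
      h.shiftedHom_eq_zero_of_neg f₁ f₂ f₃ hT
    have hcoker := AbelianSubcategory.isColimitCokernelCoforkOfDistTriang
      h.shiftedHom_eq_zero_of_neg f₁ f₂ f₃ hT
    { exact := ShortComplex.exact_of_f_is_kernel _ hker
      mono_f := mono_of_isLimit_fork hker
      epi_g := epi_of_isColimit_cofork hcoker }

lemma exists_ses_of_hom {X Y : A} (c : h.ι.obj X ⟶ (h.ι.obj Y)⟦(1 : ℤ)⟧) :
    ∃ s : SES A X Y, Triangle.mk (h.ι.map s.i) (h.ι.map s.p) c ∈ distTriang D := by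
  obtain ⟨E, f, g, hT⟩ := distinguished_cocone_triangle₂ c
  have hE : heartProp D t E :=
    ⟨(t.isLE₂ _ hT 0 (h.isLE_obj Y) (h.isLE_obj X)).le,
      (t.isGE₂ _ hT 0 (h.isGE_obj Y) (h.isGE_obj X)).ge⟩
  obtain ⟨E₀, ⟨α⟩⟩ := (h.essImage_iff E).2 hE
  have hT₀ : Triangle.mk (h.ι.map (h.ι.preimage (f ≫ α.inv)))
      (h.ι.map (h.ι.preimage (α.hom ≫ g))) c ∈ distTriang D := by
    simp only [Functor.map_preimage]
    exact isomorphic_distinguished _ hT _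
      (Triangle.isoMk _ _ (Iso.refl _) α (Iso.refl _)
        (show (f ≫ α.inv) ≫ α.hom = 𝟙 _ ≫ f by simp)
        (show (α.hom ≫ g) ≫ 𝟙 _ = α.hom ≫ g by simp)
        (show c ≫ (𝟙 _)⟦(1 : ℤ)⟧' = 𝟙 _ ≫ c by simp))
  exact ⟨h.sesOfDistTriang _ _ c hT₀, hT₀⟩

lemma extHom_of_distTriang {X Y : A} (s s' : SES A X Y) (c : h.ι.obj X ⟶ (h.ι.obj Y)⟦(1 : ℤ)⟧)
    (hs : Triangle.mk (h.ι.map s.i) (h.ι.map s.p) c ∈ distTriang D)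
    (hs' : Triangle.mk (h.ι.map s'.i) (h.ι.map s'.p) c ∈ distTriang D) :
    ExtHom A (𝟙 Y) (𝟙 X) (.base s) (.base s') := by
  obtain ⟨b, hb₁, hb₂⟩ : ∃ b, h.ι.map s.i ≫ b = 𝟙 _ ≫ h.ι.map s'.i ∧
      h.ι.map s.p ≫ 𝟙 _ = b ≫ h.ι.map s'.p :=
    complete_distinguished_triangle_morphism₂ _ _ hs hs' (𝟙 _) (𝟙 _)
      (show c ≫ (𝟙 _)⟦(1 : ℤ)⟧' = 𝟙 _ ≫ c by simp)
  refine .base s s' (h.ι.preimage b) (h.ι.map_injective ?_) (h.ι.map_injective ?_)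
  · rw [Functor.map_comp, Functor.map_comp, Functor.map_preimage, hb₁]
    simp
  · rw [Functor.map_comp, Functor.map_comp, Functor.map_preimage, ← hb₂]
    simp

end HeartData

end Heart

section Realization

variable {A : Type*} [Category A] [Abelian A]

lemma ExtSeq.eq_base {X Y : A} (ξ : ExtSeq A 1 X Y) : ∃ s, ξ = .base s := by
  cases ξ with
  | base s => exact ⟨s, rfl⟩
  | splice s ξ' => cases ξ'

lemma ExtSeq.eq_splice_base {X Y : A} (ξ : ExtSeq A 2 X Y) :
    ∃ (Z : A) (s : SES A Z Y) (s₁ : SES A X Z), ξ = .splice s (.base s₁) := by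
  cases ξ with
  | splice s ξ' =>
    obtain ⟨s₁, rfl⟩ := ξ'.eq_base
    exact ⟨_, s, s₁, rfl⟩

variable {DbA : Type*} [Category DbA] [HasZeroObject DbA] [Preadditive DbA] [HasShift DbA ℤ]
  [∀ n : ℤ, (shiftFunctor DbA n).Additive] [Pretriangulated DbA] (dd : DerivedData A DbA)

namespace DerivedData

/-- `θ¹`, with its degree written `(1 : ℤ)` rather than `((1 : ℕ) : ℤ)`. -/
def θ₁ {X Y : A} (s : SES A X Y) :
    ShiftedHom (dd.heart.ι.obj X) (dd.heart.ι.obj Y) (1 : ℤ) :=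
  dd.θ 1 X Y (.base s)

lemma distTriang_θ₁ {X Y : A} (s : SES A X Y) :
    Triangle.mk (dd.heart.ι.map s.i) (dd.heart.ι.map s.p) (dd.θ₁ s) ∈ distTriang DbA := by
  simpa [θ₁] using dd.can.base s

lemma θ₁_eq_of_extHom {X Y : A} {s s' : SES A X Y}
    (hss' : ExtHom A (𝟙 Y) (𝟙 X) (.base s) (.base s')) : dd.θ₁ s = dd.θ₁ s' :=
  dd.can.compat _ _ (.rel _ _ hss')

lemma exists_θ₁_eq {X Y : A} (g : ShiftedHom (dd.heart.ι.obj X) (dd.heart.ι.obj Y) (1 : ℤ)) :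
    ∃ s : SES A X Y, dd.θ₁ s = g := by
  obtain ⟨ξ, hξ⟩ := (dd.bij 1 le_rfl X Y).2 g
  obtain ⟨ξ, rfl⟩ := Quot.exists_rep ξ
  obtain ⟨s, rfl⟩ := ξ.eq_base
  exact ⟨s, hξ⟩

lemma exists_θ₁_comp_θ₁_eq {X Y : A}
    (g : ShiftedHom (dd.heart.ι.obj X) (dd.heart.ι.obj Y) (2 : ℤ)) :
    ∃ (Z : A) (s₁ : SES A X Z) (s : SES A Z Y),
      (dd.θ₁ s₁).comp (dd.θ₁ s) one_add_one_eq_two = g := by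
  obtain ⟨ξ, hξ⟩ := (dd.bij 2 one_le_two X Y).2 g
  obtain ⟨ξ, rfl⟩ := Quot.exists_rep ξ
  obtain ⟨Z, s, s₁, rfl⟩ := ξ.eq_splice_base
  exact ⟨Z, s₁, s, (dd.can.splice s (.base s₁)).symm.trans hξ⟩

end DerivedData

variable {D : Type*} [Category D] [HasZeroObject D] [Preadditive D] [HasShift D ℤ]
  [∀ n : ℤ, (shiftFunctor D n).Additive] [Pretriangulated D] {t : TStructure D}
  (h : HeartData A D t) (F : DbA ⥤ D) [F.CommShift ℤ] (e : dd.heart.ι ⋙ F ≅ h.ι)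

noncomputable def realizationMap (n : ℤ) {X Y : A}
    (g : ShiftedHom (dd.heart.ι.obj X) (dd.heart.ι.obj Y) n) :
    ShiftedHom (h.ι.obj X) (h.ι.obj Y) n :=
  e.inv.app X ≫ F.map g ≫ (F.commShiftIso n).hom.app (dd.heart.ι.obj Y) ≫ (e.hom.app Y)⟦n⟧'

lemma realizationMap_eq_homCongr_comp (n : ℤ) (X Y : A) :
    realizationMap dd h F e n (X := X) (Y := Y) =
      (e.app X).homCongr ((shiftFunctor D n).mapIso (e.app Y)) ∘ fun g => g.map F := by
  ext g
  simp [realizationMap, ShiftedHom.map, Iso.homCongr_apply]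

lemma realizationMap_comp_left (n : ℤ) {X X' Y : A} (u : X' ⟶ X)
    (g : ShiftedHom (dd.heart.ι.obj X) (dd.heart.ι.obj Y) n) :
    realizationMap dd h F e n (dd.heart.ι.map u ≫ g) =
      h.ι.map u ≫ realizationMap dd h F e n g := by
  simp [realizationMap]

variable [F.IsTriangulated]

lemma distTriang_realizationMap_θ₁ {X Y : A} (s : SES A X Y) :
    Triangle.mk (h.ι.map s.i) (h.ι.map s.p) (realizationMap dd h F e 1 (dd.θ₁ s)) ∈
      distTriang D := by
  refine isomorphic_distinguished _ (F.map_distinguished _ (dd.distTriang_θ₁ s)) _ ?_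
  refine Triangle.isoMk _ _ (e.app Y).symm (e.app s.E).symm (e.app X).symm
    (e.inv.naturality s.i) (e.inv.naturality s.p) ?_
  change realizationMap dd h F e 1 (dd.θ₁ s) ≫ (e.inv.app Y)⟦(1 : ℤ)⟧' =
    e.inv.app X ≫ F.map (dd.θ₁ s) ≫ (F.commShiftIso (1 : ℤ)).hom.app (dd.heart.ι.obj Y)
  simp [realizationMap, ← Functor.map_comp]

theorem realizationMap_one_bijective (X Y : A) :
    Function.Bijective (realizationMap dd h F e 1 (X := X) (Y := Y)) := by
  refine ⟨fun g g' hgg' => ?_, fun c => ?_⟩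
  · obtain ⟨s, rfl⟩ := dd.exists_θ₁_eq g
    obtain ⟨s', rfl⟩ := dd.exists_θ₁_eq g'
    have hs' := distTriang_realizationMap_θ₁ dd h F e s'
    rw [← hgg'] at hs'
    exact dd.θ₁_eq_of_extHom
      (h.extHom_of_distTriang s s' _ (distTriang_realizationMap_θ₁ dd h F e s) hs')
  · obtain ⟨s, hs⟩ := h.exists_ses_of_hom c
    -- both triangles complete `ι s.i, ι s.p`, so their third morphisms differ by some `γ`
    obtain ⟨γ, -, hγ⟩ : ∃ γ : h.ι.obj X ⟶ h.ι.obj X, _ ∧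
        c ≫ (𝟙 _)⟦(1 : ℤ)⟧' = γ ≫ realizationMap dd h F e 1 (dd.θ₁ s) :=
      complete_distinguished_triangle_morphism _ _ hs
        (distTriang_realizationMap_θ₁ dd h F e s) (𝟙 _) (𝟙 _)
        (show h.ι.map s.i ≫ 𝟙 _ = 𝟙 _ ≫ h.ι.map s.i by simp)
    refine ⟨dd.heart.ι.map (h.ι.preimage γ) ≫ dd.θ₁ s, ?_⟩
    rw [realizationMap_comp_left, Functor.map_preimage]
    simpa using hγ.symm

theorem realizationMap_two_injective (X Y : A) :
    Function.Injective (realizationMap dd h F e 2 (X := X) (Y := Y)) := by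
  have hF₁ (X Y : A) : Function.Bijective
      (fun g : ShiftedHom (dd.heart.ι.obj X) (dd.heart.ι.obj Y) (1 : ℤ) => g.map F) := by
    rw [← Equiv.comp_bijective, ← realizationMap_eq_homCongr_comp]
    exact realizationMap_one_bijective dd h F e X Y
  rw [realizationMap_eq_homCongr_comp, Equiv.comp_injective]
  refine (injective_iff_map_eq_zero (AddMonoidHom.mk'
    (fun g : ShiftedHom (dd.heart.ι.obj X) (dd.heart.ι.obj Y) (2 : ℤ) => g.map F)
    fun a b => ShiftedHom.map_add a b F)).2 fun g hg => ?_
  obtain ⟨Z, s₁, s, rfl⟩ := dd.exists_θ₁_comp_θ₁_eq g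
  exact ShiftedHom.comp_mor₃_eq_zero_of_map_eq_zero F _ (dd.distTriang_θ₁ s)
    (hF₁ X s.E).2 (hF₁ X Z).1 _ _ hg

end Realization

/-- A realization functor `F : D^b(A) → D` induces an isomorphism
`Ext^1_A(X, Y) → Hom_D(X, Σ Y)` and an injection `Ext^2_A(X, Y) → Hom_D(X, Σ² Y)`,
where `Ext^n_A(X, Y) = Hom_{D^b(A)}(X, Σ^n Y)`. -/
theorem statement_12 {A : Type*} [Category A] [Abelian A]
    {DbA : Type*} [Category DbA] [HasZeroObject DbA] [Preadditive DbA] [HasShift DbA ℤ]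
    [∀ n : ℤ, (shiftFunctor DbA n).Additive] [Pretriangulated DbA]
    {D : Type*} [Category D] [HasZeroObject D] [Preadditive D] [HasShift D ℤ]
    [∀ n : ℤ, (shiftFunctor D n).Additive] [Pretriangulated D]
    (dd : DerivedData A DbA)
    (t : TStructure D) (hb : IsBoundedTStructure D t) (h : HeartData A D t)
    (F : DbA ⥤ D) [F.CommShift ℤ] [F.IsTriangulated] (e : dd.heart.ι ⋙ F ≅ h.ι)
    (X Y : A) :
    Function.Bijective (fun g : dd.heart.ι.obj X ⟶ (dd.heart.ι.obj Y)⟦(1 : ℤ)⟧ =>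
        e.inv.app X ≫ F.map g ≫ (F.commShiftIso (1 : ℤ)).hom.app (dd.heart.ι.obj Y) ≫
          (e.hom.app Y)⟦(1 : ℤ)⟧') ∧
    Function.Injective (fun g : dd.heart.ι.obj X ⟶ (dd.heart.ι.obj Y)⟦(2 : ℤ)⟧ =>
        e.inv.app X ≫ F.map g ≫ (F.commShiftIso (2 : ℤ)).hom.app (dd.heart.ι.obj Y) ≫
          (e.hom.app Y)⟦(2 : ℤ)⟧') :=
  ⟨realizationMap_one_bijective dd h F e X Y, realizationMap_two_injective dd h F e X Y⟩

end HRS
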